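/- arXiv:2106.04379 — 5 statements merged into one kernel-verified Lean document; each statement's English description precedes it below -/
import Mathlib

section
/- Fix a policy π and initial distribution P_0, and let k ≥ 1. If for all timesteps t ≥ k, all z_t ∈ Z, all histories {a_{t-i}, z_{t-i}}_{i=1}^k, and all x_t ∈ X with φ(x_t) = z_t, it holds that B_{φ,t}^{π(k)}(x_t | z_t, {a_{t-i}, z_{t-i}}_{i=1}^k) = B_{φ,t}^{π(k-1)}(x_t | z_t, {a_{t-i}, z_{t-i}}_{i=1}^{k-1}), then for all z_{t+1} ∈ Z and x_{t+1} ∈ X with φ(x_{t+1}) = z_{t+1}: B_{φ,t}^{π(k+1)}(x_{t+1} | z_{t+1}, {a_{t-i}, z_{t-i}}_{i=0}^k) = B_{φ,t}^{π(k)}(x_{t+1} | z_{t+1}, {a_{t-i}, z_{t-i}}_{i=0}^{k-1}). -/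
namespace MarkovAbstraction

noncomputable section

variable {X A Z : Type*} [Fintype X] [Fintype A] [Fintype Z] [DecidableEq Z]

/-- `T x' a x` is the probability of transitioning to `x'` given action `a` in state `x`;
`T (· | a, x)` must be a probability distribution for each `a, x`. -/
def IsKernel (T : X → A → X → ℝ) : Prop :=
  (∀ x' a x, 0 ≤ T x' a x) ∧ ∀ a x, ∑ x' : X, T x' a x = 1

/-- `π t a x` is the probability of choosing action `a` in state `x` at timestep `t`. -/
def IsPolicy (π : ℕ → A → X → ℝ) : Prop :=
  (∀ t a x, 0 ≤ π t a x) ∧ ∀ t x, ∑ a : A, π t a x = 1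

/-- A probability distribution over ground states. -/
def IsDist (P0 : X → ℝ) : Prop :=
  (∀ x, 0 ≤ P0 x) ∧ ∑ x : X, P0 x = 1

/-- Membership in the policy class `Π_φ`: the policy assigns equal action probabilities to
ground states with the same abstract state. -/
def InPolicyClass (φ : X → Z) (π : ℕ → A → X → ℝ) : Prop :=
  ∀ t a x₁ x₂, φ x₁ = φ x₂ → π t a x₁ = π t a x₂

/-- State visitation distribution `P_t^π(x)`. -/
def Pvis (T : X → A → X → ℝ) (π : ℕ → A → X → ℝ) (P0 : X → ℝ) : ℕ → X → ℝ
  | 0 => P0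
  | t + 1 => fun x => ∑ a : A, ∑ xp : X, T x a xp * π t a xp * Pvis T π P0 t xp

/-- Belief distribution `B_{φ,t}^π(x|z)`. -/
def Bel0 (T : X → A → X → ℝ) (π : ℕ → A → X → ℝ) (P0 : X → ℝ) (φ : X → Z)
    (t : ℕ) (z : Z) (x : X) : ℝ :=
  (if φ x = z then Pvis T π P0 t x else 0) /
    ∑ xt : X, if φ xt = z then Pvis T π P0 t xt else 0

/-- `k`-step belief distribution `B_{φ,t}^{π(k)}(x | z_t, {a_{t-i}, z_{t-i}}_{i=1}^k)`,
where the history `[(a_{t-1}, z_{t-1}), ..., (a_{t-k}, z_{t-k})]` is listed most recent first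
(so `k` is the length of the history list, and the empty history gives `B_{φ,t}^{π(0)} = B_{φ,t}^π`). -/
def BelK (T : X → A → X → ℝ) (π : ℕ → A → X → ℝ) (P0 : X → ℝ) (φ : X → Z)
    (t : ℕ) : List (A × Z) → Z → X → ℝ
  | [], z, x => Bel0 T π P0 φ t z x
  | (a, zp) :: h, z, x =>
      (if φ x = z then ∑ xp : X, T x a xp * BelK T π P0 φ t h zp xp else 0) /
        ∑ xt : X, if φ xt = z then
            ∑ xtp : X, if φ xtp = zp then T xt a xtp * BelK T π P0 φ t h zp xtp else 0
          else 0

/-- Expected next-state dynamics `P_t^π(x'|x)`. -/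
def PNext (T : X → A → X → ℝ) (π : ℕ → A → X → ℝ) (t : ℕ) (x' x : X) : ℝ :=
  ∑ a : A, T x' a x * π t a x

/-- Inverse dynamics model `I_t^π(a|x',x)`. -/
def InvModel (T : X → A → X → ℝ) (π : ℕ → A → X → ℝ) (t : ℕ) (a : A) (x' x : X) : ℝ :=
  T x' a x * π t a x / PNext T π t x' x

/-- `P_t^π(x'|z) = Σ_{x̃} P_t^π(x'|x̃) B_{φ,t}^π(x̃|z)`. -/
def PNextZ (T : X → A → X → ℝ) (π : ℕ → A → X → ℝ) (P0 : X → ℝ) (φ : X → Z)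
    (t : ℕ) (x' : X) (z : Z) : ℝ :=
  ∑ x : X, PNext T π t x' x * Bel0 T π P0 φ t z x

/-- Abstract next-state dynamics `P_{φ,t}^π(z'|z) = Σ_{x'∈z'} P_t^π(x'|z)`. -/
def PZNext (T : X → A → X → ℝ) (π : ℕ → A → X → ℝ) (P0 : X → ℝ) (φ : X → Z)
    (t : ℕ) (z' z : Z) : ℝ :=
  ∑ x' : X, if φ x' = z' then PNextZ T π P0 φ t x' z else 0

/-- Abstract-state visitation distribution `P_{φ,t}^π(z') = Σ_{x'∈z'} P_t^π(x')`. -/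
def PZ (T : X → A → X → ℝ) (π : ℕ → A → X → ℝ) (P0 : X → ℝ) (φ : X → Z)
    (t : ℕ) (z' : Z) : ℝ :=
  ∑ x' : X, if φ x' = z' then Pvis T π P0 t x' else 0

/-- Abstract transition model `T_{φ,t}^π(z'|a,z)`. -/
def TZ (T : X → A → X → ℝ) (π : ℕ → A → X → ℝ) (P0 : X → ℝ) (φ : X → Z)
    (t : ℕ) (z' : Z) (a : A) (z : Z) : ℝ :=
  ∑ x' : X, if φ x' = z' then
      ∑ x : X, if φ x = z then T x' a x * Bel0 T π P0 φ t z x else 0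
    else 0

/-- Abstract inverse model `I_{φ,t}^π(a|z',z) = T_{φ,t}^π(z'|a,z) π_{φ,t}(a|z) / P_{φ,t}^π(z'|z)`,
where the common policy value `π_{φ,t}(a|z)` is given via a representative ground state `x ∈ z`
(well-defined when `π ∈ Π_φ`). -/
def InvModelZ (T : X → A → X → ℝ) (π : ℕ → A → X → ℝ) (P0 : X → ℝ) (φ : X → Z)
    (t : ℕ) (a : A) (z' z : Z) (x : X) : ℝ :=
  TZ T π P0 φ t z' a z * π t a x / PZNext T π P0 φ t z' z

/-- `C_{φ,t}^{π(k)}(x_t)` for a (history-conditioned) belief function `b`. -/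
def CK (π : ℕ → A → X → ℝ) (t : ℕ) (a : A) (b : X → ℝ) (x : X) : ℝ :=
  π t a x * b x / ∑ xt : X, π t a xt * b xt

/-- History-conditioned abstract transition model
`T_{φ,t}^{π(k)}(z₁ | a, z, history) = Σ_{x₁∈z₁} Σ_{x∈z} T(x₁|a,x) C_{φ,t}^{π(k)}(x)`,
where `b` is the corresponding history-conditioned belief. -/
def TK (T : X → A → X → ℝ) (φ : X → Z) (π : ℕ → A → X → ℝ)
    (t : ℕ) (a : A) (z : Z) (b : X → ℝ) (z1 : Z) : ℝ :=
  ∑ x1 : X, if φ x1 = z1 then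
      ∑ x : X, if φ x = z then T x1 a x * CK π t a b x else 0
    else 0

/-- History-conditioned abstract reward `R_{φ,t}^{π(k)}(z₁, a, z, history)`. -/
def RK (Rw T : X → A → X → ℝ) (φ : X → Z) (π : ℕ → A → X → ℝ)
    (t : ℕ) (a : A) (z : Z) (b : X → ℝ) (z1 : Z) : ℝ :=
  (∑ x1 : X, if φ x1 = z1 then
      ∑ x : X, if φ x = z then Rw x1 a x * T x1 a x * CK π t a b x else 0
    else 0) / TK T φ π t a z b z1

/-- Backwards dynamics `P_t^π(x, a | x')`. -/
def PBack (T : X → A → X → ℝ) (π : ℕ → A → X → ℝ) (P0 : X → ℝ)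
    (t : ℕ) (x : X) (a : A) (x' : X) : ℝ :=
  T x' a x * π t a x * Pvis T π P0 t x /
    ∑ xt : X, ∑ ap : A, T x' ap xt * π t ap xt * Pvis T π P0 t xt

end

section

variable {X A Z : Type*} [Fintype X] [Fintype A] [DecidableEq Z]
variable (T : X → A → X → ℝ) (π : ℕ → A → X → ℝ) (P0 : X → ℝ) (φ : X → Z) (t : ℕ)

theorem belK_eq_zero_of_ne (h : List (A × Z)) {z : Z} {x : X} (hx : φ x ≠ z) :
    BelK T π P0 φ t h z x = 0 := by
  cases h with
  | nil => simp [BelK, Bel0, hx]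
  | cons p h => simp [BelK, hx]

/-- The recursion of `BelK` sees the shorter history only through `BelK … h zp`, which vanishes
outside `zp`. -/
theorem belK_cons_congr {h h' : List (A × Z)} (a : A) (zp : Z)
    (heq : ∀ x, φ x = zp → BelK T π P0 φ t h zp x = BelK T π P0 φ t h' zp x) :
    BelK T π P0 φ t ((a, zp) :: h) = BelK T π P0 φ t ((a, zp) :: h') := by
  have hbel : BelK T π P0 φ t h zp = BelK T π P0 φ t h' zp := by
    funext x
    by_cases hx : φ x = zp
    · exact heq x hx
    · rw [belK_eq_zero_of_ne T π P0 φ t h hx, belK_eq_zero_of_ne T π P0 φ t h' hx]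
  funext z x
  rw [BelK, BelK, hbel]

end

variable {X A Z : Type*} [Fintype X] [Fintype A] [Fintype Z] [DecidableEq Z]

theorem belief_step_to_belief_step_general
    (T : X → A → X → ℝ) (π : ℕ → A → X → ℝ) (P0 : X → ℝ) (φ : X → Z)
    (k : ℕ)
    (hyp : ∀ t : ℕ, k ≤ t → ∀ (h : List (A × Z)) (p : A × Z), (h ++ [p]).length = k →
      ∀ (zt : Z) (x : X), φ x = zt →
        BelK T π P0 φ t (h ++ [p]) zt x = BelK T π P0 φ t h zt x) :
    ∀ t : ℕ, k ≤ t → ∀ (h : List (A × Z)) (p : A × Z), (h ++ [p]).length = k →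
      ∀ (a0 : A) (zt z1 : Z) (x1 : X), φ x1 = z1 →
        BelK T π P0 φ t ((a0, zt) :: (h ++ [p])) z1 x1
          = BelK T π P0 φ t ((a0, zt) :: h) z1 x1 := by
  intro t ht h p hlen a0 zt z1 x1 _
  rw [belK_cons_congr T π P0 φ t a0 zt (hyp t ht h p hlen zt)]

/-- **Lemma 2.** If the `k`-step and `(k-1)`-step belief distributions agree for all
timesteps `t ≥ k`, all abstract states, all histories of length `k`, and all compatible
ground states, then the `(k+1)`-step and `k`-step belief distributions agree (where the
`(k+1)`-step history extends the `k`-step history `hist ++ [p]` by one more recent pair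
`(a0, zt)`, and the `k`-step one extends `hist`). -/
theorem belief_step_to_belief_step
    (T : X → A → X → ℝ) (π : ℕ → A → X → ℝ) (P0 : X → ℝ) (φ : X → Z)
    (hT : IsKernel T) (hπ : IsPolicy π) (hP0 : IsDist P0)
    -- positivity of the denominators appearing in the definitions:
    (hden0 : ∀ (t : ℕ) (z : Z), 0 < ∑ x : X, if φ x = z then Pvis T π P0 t x else 0)
    (hden : ∀ (t : ℕ) (a : A) (zp : Z) (h : List (A × Z)) (z : Z),
      0 < ∑ xt : X, if φ xt = z then
          ∑ xtp : X, if φ xtp = zp then T xt a xtp * BelK T π P0 φ t h zp xtp else 0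
        else 0)
    (k : ℕ) (hk : 1 ≤ k)
    (hyp : ∀ t : ℕ, k ≤ t → ∀ (h : List (A × Z)) (p : A × Z), (h ++ [p]).length = k →
      ∀ (zt : Z) (x : X), φ x = zt →
        BelK T π P0 φ t (h ++ [p]) zt x = BelK T π P0 φ t h zt x) :
    ∀ t : ℕ, k ≤ t → ∀ (h : List (A × Z)) (p : A × Z), (h ++ [p]).length = k →
      ∀ (a0 : A) (zt z1 : Z) (x1 : X), φ x1 = z1 →
        BelK T π P0 φ t ((a0, zt) :: (h ++ [p])) z1 x1
          = BelK T π P0 φ t ((a0, zt) :: h) z1 x1 :=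
  belief_step_to_belief_step_general T π P0 φ k hyp

end MarkovAbstraction
end

section
/- (Theorem 1, main result.) Suppose φ : X → Z is an abstraction of the MDP M = (X, A, R, T, γ) such that for every policy π in the policy class Π_φ and every timestep t the following two conditions hold: (Inverse Model) I_{φ,t}^π(a|z',z) = I_t^π(a|x',x) for all a ∈ A, z, z' ∈ Z, and all x, x' ∈ X with φ(x) = z and φ(x') = z'; and (Density Ratio) P_{φ,t}^π(z'|z)/P_{φ,t}^π(z') = P_t^π(x'|z)/P_t^π(x') for all z, z' ∈ Z and all x' ∈ X with φ(x') = z'. Then φ is a Markov abstraction: for every π ∈ Π_φ, every t, every k ≥ 1, every history (z_t, {a_{t-i}, z_{t-i}}_{i=1}^k), and every x ∈ X, B_{φ,t}^{π(k)}(x | z_t, {a_{t-i}, z_{t-i}}_{i=1}^k) = B_{φ,t}^π(x | z_t). -/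
namespace MarkovAbstraction

noncomputable section

variable {X A Z : Type*} [Fintype X] [Fintype A] [Fintype Z] [DecidableEq Z]

/-!
The one-step belief update `B^{(1)}(x | z, a, z_p)` is, on `z`, proportional to
`Σ_{x_p} T(x|a,x_p) B(x_p|z_p)`. Apply both conditions to the policy `σ` that agrees with `π`
before time `t` and is uniform at time `t`: it lies in `Π_φ`, has the same beliefs at time `t`,
and its action probabilities are nonzero, so they cancel from the inverse model condition. That
condition rewrites `T(x|a,x_p)` as `T_φ(z|a,z_p) P^σ(x|x_p) / P_φ^σ(z|z_p)` for `x_p ∈ z_p`,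
and the density ratio condition rewrites `Σ_{x_p} P^σ(x|x_p) B(x_p|z_p)` as
`P_φ^σ(z|z_p) P_t(x) / P_φ(z)`. Hence the update is proportional to `P_t(x)` on `z`, i.e. it is
`B(x|z)`; since `B^{(k)}` is built from `B^{(k-1)}` by the same update, induction on `k` concludes.
-/

variable {T : X → A → X → ℝ} {P0 : X → ℝ} {φ : X → Z}

theorem Pvis_congr {π π' : ℕ → A → X → ℝ} {t : ℕ} (h : ∀ s < t, π s = π' s) :
    Pvis T π P0 t = Pvis T π' P0 t := by
  induction t with
  | zero => rfl
  | succ t ih =>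
    rw [Pvis, Pvis, ih fun s hs => h s (by omega), h t (by omega)]

omit [Fintype Z] in
theorem Bel0_eq_zero_of_ne {π : ℕ → A → X → ℝ} {t : ℕ} {z : Z} {x : X} (hx : φ x ≠ z) :
    Bel0 T π P0 φ t z x = 0 := by
  simp [Bel0, hx]

def withUniformAt (π : ℕ → A → X → ℝ) (t : ℕ) : ℕ → A → X → ℝ :=
  Function.update π t fun _ _ => (Fintype.card A : ℝ)⁻¹

section withUniformAt

variable {π : ℕ → A → X → ℝ}

omit [Fintype X] in
theorem IsPolicy.withUniformAt [Nonempty A] (hπ : IsPolicy π) (t : ℕ) :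
    IsPolicy (withUniformAt π t) := by
  refine ⟨fun s a x => ?_, fun s x => ?_⟩ <;> rcases eq_or_ne s t with rfl | hs <;>
    simp [MarkovAbstraction.withUniformAt, Function.update_of_ne, *, hπ.1, hπ.2]

omit [Fintype X] [Fintype Z] [DecidableEq Z] in
theorem InPolicyClass.withUniformAt (hπ : InPolicyClass φ π) (t : ℕ) :
    InPolicyClass φ (withUniformAt π t) := by
  intro s a x₁ x₂ hx
  rcases eq_or_ne s t with rfl | hs
  · simp [MarkovAbstraction.withUniformAt]
  · simp [MarkovAbstraction.withUniformAt, Function.update_of_ne hs, hπ s a x₁ x₂ hx]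

omit [Fintype X] in
theorem withUniformAt_self_ne_zero [Nonempty A] (t : ℕ) (a : A) (x : X) :
    withUniformAt π t t a x ≠ 0 := by
  simp [MarkovAbstraction.withUniformAt]

theorem Pvis_withUniformAt (t : ℕ) : Pvis T (withUniformAt π t) P0 t = Pvis T π P0 t :=
  Pvis_congr fun _ hs => Function.update_of_ne hs.ne _ _

end withUniformAt

section OneStep

variable {σ : ℕ → A → X → ℝ} {t : ℕ} {a : A}

omit [Fintype Z] in
theorem T_eq_of_invModelZ_eq_invModel {z z' : Z} {x x' : X}
    (h : InvModelZ T σ P0 φ t a z' z x = InvModel T σ t a x' x) (hσ : σ t a x ≠ 0)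
    (hZ : PZNext T σ P0 φ t z' z ≠ 0) (hX : PNext T σ t x' x ≠ 0) :
    T x' a x = TZ T σ P0 φ t z' a z / PZNext T σ P0 φ t z' z * PNext T σ t x' x := by
  rw [InvModelZ, InvModel, div_eq_div_iff hZ hX] at h
  field_simp
  exact mul_right_cancel₀ hσ (by linear_combination -h)

omit [Fintype Z] in
theorem sum_T_mul_Bel0_eq {x : X} {z zp : Z}
    (hInvZ : ∀ xp, φ xp = zp → InvModelZ T σ P0 φ t a z zp xp = InvModel T σ t a x xp)
    (hRatioZ : PZNext T σ P0 φ t z zp / PZ T σ P0 φ t z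
      = PNextZ T σ P0 φ t x zp / Pvis T σ P0 t x)
    (hσ : ∀ xp, σ t a xp ≠ 0) (hX : ∀ xp, PNext T σ t x xp ≠ 0)
    (hZ : PZNext T σ P0 φ t z zp ≠ 0) (hPZ : PZ T σ P0 φ t z ≠ 0)
    (hvis : Pvis T σ P0 t x ≠ 0) :
    ∑ xp, T x a xp * Bel0 T σ P0 φ t zp xp
      = TZ T σ P0 φ t z a zp / PZ T σ P0 φ t z * Pvis T σ P0 t x := by
  have hT : ∀ xp, T x a xp * Bel0 T σ P0 φ t zp xp
      = TZ T σ P0 φ t z a zp / PZNext T σ P0 φ t z zp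
        * (PNext T σ t x xp * Bel0 T σ P0 φ t zp xp) := by
    intro xp
    by_cases hxp : φ xp = zp
    · rw [T_eq_of_invModelZ_eq_invModel (hInvZ xp hxp) (hσ xp) hZ (hX xp), mul_assoc]
    · simp [Bel0_eq_zero_of_ne hxp]
  have hNextZ : PNextZ T σ P0 φ t x zp
      = PZNext T σ P0 φ t z zp / PZ T σ P0 φ t z * Pvis T σ P0 t x := by
    rw [hRatioZ, div_mul_cancel₀ _ hvis]
  rw [Finset.sum_congr rfl fun xp _ => hT xp, ← Finset.mul_sum, ← PNextZ, hNextZ]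
  field_simp

omit [Fintype Z] in
theorem BelK_cons_eq_Bel0 {π : ℕ → A → X → ℝ} {h : List (A × Z)} {zp z : Z} {c : ℝ}
    (hh : BelK T π P0 φ t h zp = Bel0 T π P0 φ t zp)
    (hstep : ∀ x, φ x = z → ∑ xp, T x a xp * Bel0 T π P0 φ t zp xp = c * Pvis T π P0 t x)
    (hden : (∑ xt : X, if φ xt = z then
            ∑ xtp : X, if φ xtp = zp then T xt a xtp * BelK T π P0 φ t h zp xtp else 0
          else 0) ≠ 0) :
    BelK T π P0 φ t ((a, zp) :: h) z = Bel0 T π P0 φ t z := by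
  have hrestrict : ∀ xt, (∑ xtp : X, if φ xtp = zp then T xt a xtp * Bel0 T π P0 φ t zp xtp
      else 0) = ∑ xtp, T xt a xtp * Bel0 T π P0 φ t zp xtp := fun xt =>
    Finset.sum_congr rfl fun xtp _ => by
      split_ifs with hxtp
      · rfl
      · rw [Bel0_eq_zero_of_ne hxtp, mul_zero]
  have hmass : ∀ xt, (if φ xt = z then ∑ xtp, T xt a xtp * Bel0 T π P0 φ t zp xtp else 0)
      = c * if φ xt = z then Pvis T π P0 t xt else 0 := fun xt => by
    split_ifs with hxt
    · exact hstep xt hxt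
    · rw [mul_zero]
  simp only [hh, hrestrict, hmass, ← Finset.mul_sum] at hden
  funext x
  rw [BelK, hh]
  simp only [hrestrict, hmass, ← Finset.mul_sum]
  exact mul_div_mul_left _ _ (left_ne_zero_of_mul hden)

end OneStep

theorem markov_abstraction_sufficient_conditions_general
    (T : X → A → X → ℝ) (P0 : X → ℝ) (φ : X → Z)
    -- positivity of the denominators appearing in the definitions:
    (hpos : ∀ π : ℕ → A → X → ℝ, IsPolicy π → InPolicyClass φ π →
      (∀ (t : ℕ) (z : Z), 0 < ∑ x : X, if φ x = z then Pvis T π P0 t x else 0) ∧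
      (∀ (t : ℕ) (a : A) (zp : Z) (h : List (A × Z)) (z : Z),
        0 < ∑ xt : X, if φ xt = z then
            ∑ xtp : X, if φ xtp = zp then T xt a xtp * BelK T π P0 φ t h zp xtp else 0
          else 0) ∧
      (∀ (t : ℕ) (x' x : X), 0 < PNext T π t x' x) ∧
      (∀ (t : ℕ) (x : X), 0 < Pvis T π P0 t x) ∧
      (∀ (t : ℕ) (z' z : Z), 0 < PZNext T π P0 φ t z' z) ∧
      (∀ (t : ℕ) (z' : Z), 0 < PZ T π P0 φ t z'))
    -- Inverse Model condition:
    (hInv : ∀ π : ℕ → A → X → ℝ, IsPolicy π → InPolicyClass φ π →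
      ∀ (t : ℕ) (a : A) (z z' : Z) (x x' : X), φ x = z → φ x' = z' →
        InvModelZ T π P0 φ t a z' z x = InvModel T π t a x' x)
    -- Density Ratio condition:
    (hRatio : ∀ π : ℕ → A → X → ℝ, IsPolicy π → InPolicyClass φ π →
      ∀ (t : ℕ) (z z' : Z) (x' : X), φ x' = z' →
        PZNext T π P0 φ t z' z / PZ T π P0 φ t z'
          = PNextZ T π P0 φ t x' z / Pvis T π P0 t x') :
    ∀ π : ℕ → A → X → ℝ, IsPolicy π → InPolicyClass φ π →
      ∀ (t : ℕ) (hist : List (A × Z)), hist ≠ [] →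
        ∀ (z : Z) (x : X), BelK T π P0 φ t hist z x = Bel0 T π P0 φ t z x := by
  intro π hπ hπφ t hist _ z x
  have : Nonempty A := by
    by_contra hA
    simpa [not_nonempty_iff.mp hA] using hπ.2 t x
  set σ := withUniformAt π t
  have hσ : IsPolicy σ := hπ.withUniformAt t
  have hσφ : InPolicyClass φ σ := hπφ.withUniformAt t
  have hvis : Pvis T σ P0 t = Pvis T π P0 t := Pvis_withUniformAt t
  have hBel0 : Bel0 T σ P0 φ t = Bel0 T π P0 φ t := by funext; simp only [Bel0, hvis]
  obtain ⟨-, hden, -, hvis_pos, -, hPZ_pos⟩ := hpos π hπ hπφ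
  obtain ⟨-, -, hnext_pos, -, hZnext_pos, -⟩ := hpos σ hσ hσφ
  have hstep : ∀ a zp z x, φ x = z → ∑ xp, T x a xp * Bel0 T π P0 φ t zp xp
      = TZ T π P0 φ t z a zp / PZ T π P0 φ t z * Pvis T π P0 t x := by
    intro a zp z x hx
    have key := sum_T_mul_Bel0_eq (fun xp hxp => hInv σ hσ hσφ t a zp z xp x hxp hx)
      (hRatio σ hσ hσφ t zp z x hx) (withUniformAt_self_ne_zero t a)
      (fun xp => (hnext_pos t x xp).ne') (hZnext_pos t z zp).ne'
      (by simpa only [PZ, hvis] using (hPZ_pos t z).ne') (hvis ▸ (hvis_pos t x).ne')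
    simpa only [TZ, PZ, hBel0, hvis] using key
  suffices hall : ∀ hist, BelK T π P0 φ t hist = Bel0 T π P0 φ t from congrFun₂ (hall hist) z x
  intro hist
  induction hist with
  | nil => funext z x; rw [BelK]
  | cons p h ih =>
    obtain ⟨a, zp⟩ := p
    funext z
    exact BelK_cons_eq_Bel0 (congrFun ih zp) (hstep a zp z) (hden t a zp h z).ne'

/-- **Theorem 1 (main result).** If the Inverse Model condition and the Density Ratio
condition hold for every policy in the policy class `Π_φ` and every timestep `t`, then
`φ` is a Markov abstraction: for every `π ∈ Π_φ`, every `t`, every `k ≥ 1` (i.e. every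
nonempty history), and every ground state `x`, the `k`-step belief distribution equals
the `0`-step belief distribution. -/
theorem markov_abstraction_sufficient_conditions
    (T : X → A → X → ℝ) (P0 : X → ℝ) (φ : X → Z)
    (hT : IsKernel T) (hP0 : IsDist P0)
    -- positivity of the denominators appearing in the definitions:
    (hpos : ∀ π : ℕ → A → X → ℝ, IsPolicy π → InPolicyClass φ π →
      (∀ (t : ℕ) (z : Z), 0 < ∑ x : X, if φ x = z then Pvis T π P0 t x else 0) ∧
      (∀ (t : ℕ) (a : A) (zp : Z) (h : List (A × Z)) (z : Z),
        0 < ∑ xt : X, if φ xt = z then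
            ∑ xtp : X, if φ xtp = zp then T xt a xtp * BelK T π P0 φ t h zp xtp else 0
          else 0) ∧
      (∀ (t : ℕ) (x' x : X), 0 < PNext T π t x' x) ∧
      (∀ (t : ℕ) (x : X), 0 < Pvis T π P0 t x) ∧
      (∀ (t : ℕ) (z' z : Z), 0 < PZNext T π P0 φ t z' z) ∧
      (∀ (t : ℕ) (z' : Z), 0 < PZ T π P0 φ t z'))
    -- Inverse Model condition:
    (hInv : ∀ π : ℕ → A → X → ℝ, IsPolicy π → InPolicyClass φ π →
      ∀ (t : ℕ) (a : A) (z z' : Z) (x x' : X), φ x = z → φ x' = z' →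
        InvModelZ T π P0 φ t a z' z x = InvModel T π t a x' x)
    -- Density Ratio condition:
    (hRatio : ∀ π : ℕ → A → X → ℝ, IsPolicy π → InPolicyClass φ π →
      ∀ (t : ℕ) (z z' : Z) (x' : X), φ x' = z' →
        PZNext T π P0 φ t z' z / PZ T π P0 φ t z'
          = PNextZ T π P0 φ t x' z / Pvis T π P0 t x') :
    ∀ π : ℕ → A → X → ℝ, IsPolicy π → InPolicyClass φ π →
      ∀ (t : ℕ) (hist : List (A × Z)), hist ≠ [] →
        ∀ (z : Z) (x : X), BelK T π P0 φ t hist z x = Bel0 T π P0 φ t z x :=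
  markov_abstraction_sufficient_conditions_general T P0 φ hpos hInv hRatio

end

end MarkovAbstraction
end

section
/- (Corollary C.2.) Fix an MDP M, abstraction φ, policy π, and initial distribution P_0. If there exists some n ≥ 1, a timestep t, and a history such that B_{φ,t}^{π(n)} ≠ B_{φ,t}^π (the n-step belief distribution differs from the 0-step belief distribution), then already the 1-step belief distribution differs: there exist a timestep t, a history (z_t, a_{t-1}, z_{t-1}), and x ∈ X such that B_{φ,t}^{π(1)}(x | z_t, a_{t-1}, z_{t-1}) ≠ B_{φ,t}^π(x | z_t). -/
namespace MarkovAbstraction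

noncomputable section

variable {X A Z : Type*} [Fintype X] [Fintype A] [Fintype Z] [DecidableEq Z]

omit [Fintype Z] in
/-- The `k`-step belief is computed from the `(k-1)`-step belief at `z_{t-1}` exactly as the
`1`-step belief is from the `0`-step one, so one-step agreement propagates along any history. -/
theorem BelK_eq_Bel0_of_forall_singleton (T : X → A → X → ℝ) (π : ℕ → A → X → ℝ)
    (P0 : X → ℝ) (φ : X → Z) (t : ℕ)
    (h₁ : ∀ (a : A) (zp z : Z) (x : X), BelK T π P0 φ t [(a, zp)] z x = Bel0 T π P0 φ t z x) :
    ∀ (hist : List (A × Z)) (z : Z) (x : X), BelK T π P0 φ t hist z x = Bel0 T π P0 φ t z x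
  | [] => fun _ _ => rfl
  | (a, zp) :: hist => by
    have ih : BelK T π P0 φ t hist zp = Bel0 T π P0 φ t zp :=
      funext (BelK_eq_Bel0_of_forall_singleton T π P0 φ t h₁ hist zp)
    have hcons : BelK T π P0 φ t ((a, zp) :: hist) = BelK T π P0 φ t [(a, zp)] := by
      funext z x
      simp only [BelK, ih]
    rw [hcons]
    exact h₁ a zp

theorem non_markov_at_n_implies_non_markov_at_one_general
    (T : X → A → X → ℝ) (π : ℕ → A → X → ℝ) (P0 : X → ℝ) (φ : X → Z)
    (hex : ∃ (n t : ℕ) (hist : List (A × Z)) (z : Z) (x : X),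
      1 ≤ n ∧ hist.length = n ∧ BelK T π P0 φ t hist z x ≠ Bel0 T π P0 φ t z x) :
    ∃ (t : ℕ) (a : A) (zp z : Z) (x : X),
      BelK T π P0 φ t [(a, zp)] z x ≠ Bel0 T π P0 φ t z x := by
  obtain ⟨-, t, hist, z, x, -, -, hne⟩ := hex
  by_contra! h₁
  exact hne (BelK_eq_Bel0_of_forall_singleton T π P0 φ t (h₁ t) hist z x)

/-- **Corollary C.2.** If some `n`-step belief distribution (`n ≥ 1`) differs from the
`0`-step belief distribution, then already some `1`-step belief distribution differs. -/
theorem non_markov_at_n_implies_non_markov_at_one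
    (T : X → A → X → ℝ) (π : ℕ → A → X → ℝ) (P0 : X → ℝ) (φ : X → Z)
    (hT : IsKernel T) (hπ : IsPolicy π) (hP0 : IsDist P0)
    -- positivity of the denominators appearing in the definitions:
    (hden0 : ∀ (t : ℕ) (z : Z), 0 < ∑ x : X, if φ x = z then Pvis T π P0 t x else 0)
    (hden : ∀ (t : ℕ) (a : A) (zp : Z) (h : List (A × Z)) (z : Z),
      0 < ∑ xt : X, if φ xt = z then
          ∑ xtp : X, if φ xtp = zp then T xt a xtp * BelK T π P0 φ t h zp xtp else 0
        else 0)
    (hex : ∃ (n t : ℕ) (hist : List (A × Z)) (z : Z) (x : X),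
      1 ≤ n ∧ hist.length = n ∧ BelK T π P0 φ t hist z x ≠ Bel0 T π P0 φ t z x) :
    ∃ (t : ℕ) (a : A) (zp z : Z) (x : X),
      BelK T π P0 φ t [(a, zp)] z x ≠ Bel0 T π P0 φ t z x :=
  non_markov_at_n_implies_non_markov_at_one_general T π P0 φ hex

end

end MarkovAbstraction
end

section
/- (Theorem 2: given the Inverse Model condition, the Density Ratio condition is necessary.) Suppose φ : X → Z is a Markov abstraction of the MDP M = (X, A, R, T, γ) for every policy in the policy class Π_φ — i.e. B_{φ,t}^{π(k)}(x | z_t, history) = B_{φ,t}^π(x | z_t) for all π ∈ Π_φ, t, k ≥ 1, histories, and x ∈ X — and suppose the Inverse Model condition holds for every timestep t: I_{φ,t}^π(a|z',z) = I_t^π(a|x',x) for all a ∈ A, z, z' ∈ Z, and x, x' ∈ X with φ(x) = z, φ(x') = z'. Then the Density Ratio condition also holds for every timestep t: P_t^π(x'|z) / P_t^π(x') = P_{φ,t}^π(z'|z) / P_{φ,t}^π(z') for all z, z' ∈ Z and all x' ∈ X with φ(x') = z'. -/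
/-!
For `x' ∈ z'`, the one-step Markov condition `B^{π(1)}(x' | z', a, z) = B^π(x' | z')` reads
`Σ_x T(x'|a,x) B(x|z) = T_φ(z'|a,z) · P_t(x') / P_φ(z')`. Since `π ∈ Π_φ` is constant on `z`,
averaging over `a` against `π_φ(·|z)` shows that `x' ↦ P_t(x'|z)` is `c · P_t(x')` on the fibre `z'`
for a constant `c`; summing over the fibre gives `P_φ(z'|z) = c · P_φ(z')`, so both ratios are `c`.
-/

namespace MarkovAbstraction

noncomputable section

variable {X A Z : Type*} [Fintype X] [Fintype A] [Fintype Z] [DecidableEq Z]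

section DensityRatio

variable (T : X → A → X → ℝ) (π : ℕ → A → X → ℝ) (P0 : X → ℝ) (φ : X → Z) (t : ℕ)

omit [Fintype Z]

theorem Bel0_of_mem {z : Z} {x : X} (hx : φ x = z) :
    Bel0 T π P0 φ t z x = Pvis T π P0 t x / PZ T π P0 φ t z := by
  rw [Bel0, if_pos hx]
  rfl

theorem Bel0_of_not_mem {z : Z} {x : X} (hx : φ x ≠ z) : Bel0 T π P0 φ t z x = 0 := by
  rw [Bel0, if_neg hx, zero_div]

theorem BelK_singleton_of_mem {a : A} {z z' : Z} {x' : X} (hx' : φ x' = z') :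
    BelK T π P0 φ t [(a, z)] z' x' =
      (∑ x, T x' a x * Bel0 T π P0 φ t z x) / TZ T π P0 φ t z' a z := by
  rw [BelK, if_pos hx']
  rfl

theorem exists_mem_of_PZ_ne_zero {z : Z} (h : PZ T π P0 φ t z ≠ 0) : ∃ x, φ x = z := by
  obtain ⟨x, -, hx⟩ := Finset.exists_ne_zero_of_sum_ne_zero h
  exact ⟨x, by_contra fun hxz => hx (if_neg hxz)⟩

theorem sum_T_mul_Bel0_of_markov {a : A} {z z' : Z} {x' : X} (hx' : φ x' = z')
    (hTZ : TZ T π P0 φ t z' a z ≠ 0)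
    (hMarkov : BelK T π P0 φ t [(a, z)] z' x' = Bel0 T π P0 φ t z' x') :
    ∑ x, T x' a x * Bel0 T π P0 φ t z x =
      TZ T π P0 φ t z' a z * (Pvis T π P0 t x' / PZ T π P0 φ t z') := by
  rw [BelK_singleton_of_mem T π P0 φ t hx', Bel0_of_mem T π P0 φ t hx', div_eq_iff hTZ]
    at hMarkov
  rw [hMarkov, mul_comm]

theorem PNextZ_eq_sum_policy_mul {z : Z} {x₀ : X} (hπ : InPolicyClass φ π) (hx₀ : φ x₀ = z)
    (x' : X) :
    PNextZ T π P0 φ t x' z = ∑ a, π t a x₀ * ∑ x, T x' a x * Bel0 T π P0 φ t z x := by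
  simp only [PNextZ, PNext, Finset.sum_mul, Finset.mul_sum]
  rw [Finset.sum_comm]
  refine Finset.sum_congr rfl fun a _ => Finset.sum_congr rfl fun x _ => ?_
  by_cases hx : φ x = z
  · rw [hπ t a x x₀ (hx.trans hx₀.symm)]
    ring
  · simp only [Bel0_of_not_mem T π P0 φ t hx, mul_zero]

theorem PNextZ_eq_mul_Pvis_of_markov {z z' : Z} {x₀ : X} (hπ : InPolicyClass φ π)
    (hx₀ : φ x₀ = z) (hTZ : ∀ a, TZ T π P0 φ t z' a z ≠ 0)
    (hMarkov : ∀ a x', φ x' = z' → BelK T π P0 φ t [(a, z)] z' x' = Bel0 T π P0 φ t z' x')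
    (x' : X) (hx' : φ x' = z') :
    PNextZ T π P0 φ t x' z =
      (∑ a, π t a x₀ * TZ T π P0 φ t z' a z) / PZ T π P0 φ t z' * Pvis T π P0 t x' := by
  rw [PNextZ_eq_sum_policy_mul T π P0 φ t hπ hx₀, Finset.sum_div, Finset.sum_mul]
  refine Finset.sum_congr rfl fun a _ => ?_
  rw [sum_T_mul_Bel0_of_markov T π P0 φ t hx' (hTZ a) (hMarkov a x' hx')]
  ring

theorem PZNext_eq_mul_PZ {z z' : Z} {c : ℝ}
    (h : ∀ x', φ x' = z' → PNextZ T π P0 φ t x' z = c * Pvis T π P0 t x') :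
    PZNext T π P0 φ t z' z = c * PZ T π P0 φ t z' := by
  simp only [PZNext, PZ, Finset.mul_sum]
  refine Finset.sum_congr rfl fun x' _ => ?_
  split_ifs with hx'
  exacts [h x' hx', (mul_zero c).symm]

theorem density_ratio_of_proportional {z z' : Z} {x' : X} {c : ℝ}
    (h : ∀ x', φ x' = z' → PNextZ T π P0 φ t x' z = c * Pvis T π P0 t x') (hx' : φ x' = z')
    (hPvis : Pvis T π P0 t x' ≠ 0) (hPZ : PZ T π P0 φ t z' ≠ 0) :
    PNextZ T π P0 φ t x' z / Pvis T π P0 t x' = PZNext T π P0 φ t z' z / PZ T π P0 φ t z' := by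
  rw [h x' hx', PZNext_eq_mul_PZ T π P0 φ t h, mul_div_cancel_right₀ _ hPvis,
    mul_div_cancel_right₀ _ hPZ]

end DensityRatio

theorem markov_and_inverse_model_implies_density_ratio_general
    (T : X → A → X → ℝ) (P0 : X → ℝ) (φ : X → Z)
    -- positivity of the denominators appearing in the definitions:
    (hpos : ∀ π : ℕ → A → X → ℝ, IsPolicy π → InPolicyClass φ π →
      (∀ (t : ℕ) (z : Z), 0 < ∑ x : X, if φ x = z then Pvis T π P0 t x else 0) ∧
      (∀ (t : ℕ) (a : A) (zp : Z) (h : List (A × Z)) (z : Z),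
        0 < ∑ xt : X, if φ xt = z then
            ∑ xtp : X, if φ xtp = zp then T xt a xtp * BelK T π P0 φ t h zp xtp else 0
          else 0) ∧
      (∀ (t : ℕ) (x' x : X), 0 < PNext T π t x' x) ∧
      (∀ (t : ℕ) (x : X), 0 < Pvis T π P0 t x) ∧
      (∀ (t : ℕ) (z' z : Z), 0 < PZNext T π P0 φ t z' z) ∧
      (∀ (t : ℕ) (z' : Z), 0 < PZ T π P0 φ t z'))
    -- φ is a Markov abstraction over Π_φ:
    (hMarkov : ∀ π : ℕ → A → X → ℝ, IsPolicy π → InPolicyClass φ π →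
      ∀ (t : ℕ) (hist : List (A × Z)), hist ≠ [] →
        ∀ (z : Z) (x : X), BelK T π P0 φ t hist z x = Bel0 T π P0 φ t z x) :
    -- Density Ratio condition:
    ∀ π : ℕ → A → X → ℝ, IsPolicy π → InPolicyClass φ π →
      ∀ (t : ℕ) (z z' : Z) (x' : X), φ x' = z' →
        PNextZ T π P0 φ t x' z / Pvis T π P0 t x'
          = PZNext T π P0 φ t z' z / PZ T π P0 φ t z' := by
  intro π hπ hπφ t z z' x' hx'
  obtain ⟨hPZ, hTZ, -, hPvis, -, -⟩ := hpos π hπ hπφ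
  obtain ⟨x₀, hx₀⟩ := exists_mem_of_PZ_ne_zero T π P0 φ t (hPZ t z).ne'
  have hproportional := PNextZ_eq_mul_Pvis_of_markov T π P0 φ t hπφ hx₀
    (fun a => (hTZ t a z [] z').ne')
    (fun a x' _ => hMarkov π hπ hπφ t [(a, z)] (List.cons_ne_nil _ _) z' x')
  exact density_ratio_of_proportional T π P0 φ t hproportional hx' (hPvis t x').ne'
    (hPZ t z').ne'

/-- **Theorem 2.** If `φ` is a Markov abstraction for every policy in `Π_φ` and the
Inverse Model condition holds for every timestep, then the Density Ratio condition also
holds for every timestep. -/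
theorem markov_and_inverse_model_implies_density_ratio
    (T : X → A → X → ℝ) (P0 : X → ℝ) (φ : X → Z)
    (hT : IsKernel T) (hP0 : IsDist P0)
    -- positivity of the denominators appearing in the definitions:
    (hpos : ∀ π : ℕ → A → X → ℝ, IsPolicy π → InPolicyClass φ π →
      (∀ (t : ℕ) (z : Z), 0 < ∑ x : X, if φ x = z then Pvis T π P0 t x else 0) ∧
      (∀ (t : ℕ) (a : A) (zp : Z) (h : List (A × Z)) (z : Z),
        0 < ∑ xt : X, if φ xt = z then
            ∑ xtp : X, if φ xtp = zp then T xt a xtp * BelK T π P0 φ t h zp xtp else 0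
          else 0) ∧
      (∀ (t : ℕ) (x' x : X), 0 < PNext T π t x' x) ∧
      (∀ (t : ℕ) (x : X), 0 < Pvis T π P0 t x) ∧
      (∀ (t : ℕ) (z' z : Z), 0 < PZNext T π P0 φ t z' z) ∧
      (∀ (t : ℕ) (z' : Z), 0 < PZ T π P0 φ t z'))
    -- φ is a Markov abstraction over Π_φ:
    (hMarkov : ∀ π : ℕ → A → X → ℝ, IsPolicy π → InPolicyClass φ π →
      ∀ (t : ℕ) (hist : List (A × Z)), hist ≠ [] →
        ∀ (z : Z) (x : X), BelK T π P0 φ t hist z x = Bel0 T π P0 φ t z x)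
    -- Inverse Model condition:
    (hInv : ∀ π : ℕ → A → X → ℝ, IsPolicy π → InPolicyClass φ π →
      ∀ (t : ℕ) (a : A) (z z' : Z) (x x' : X), φ x = z → φ x' = z' →
        InvModelZ T π P0 φ t a z' z x = InvModel T π t a x' x) :
    -- Density Ratio condition:
    ∀ π : ℕ → A → X → ℝ, IsPolicy π → InPolicyClass φ π →
      ∀ (t : ℕ) (z z' : Z) (x' : X), φ x' = z' →
        PNextZ T π P0 φ t x' z / Pvis T π P0 t x'
          = PZNext T π P0 φ t z' z / PZ T π P0 φ t z' :=
  markov_and_inverse_model_implies_density_ratio_general T P0 φ hpos hMarkov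

end

end MarkovAbstraction
end

section
/- (Appendix D theorem: Strong Markov conditions imply kinematic inseparability.) Suppose φ : X → Z is an abstraction of the MDP M = (X, A, R, T, γ) such that for every policy π in the policy class Π_φ and every timestep t both the Inverse Model condition (I_{φ,t}^π(a|z',z) = I_t^π(a|x',x) for all a ∈ A, z, z' ∈ Z, x ∈ z, x' ∈ z') and the Strong Density Ratio condition (P_t^π(x'|x)/P_t^π(x') = P_{φ,t}^π(z'|z)/P_{φ,t}^π(z') for all z, z' ∈ Z and all x ∈ z, x' ∈ z') hold. Then φ is a kinematic inseparability abstraction over Π_φ: for every π ∈ Π_φ, every t, every a ∈ A, and all x, x'' ∈ X and x₁', x₂' ∈ X with φ(x₁') = φ(x₂'), it holds that P_t^π(x, a | x₁') = P_t^π(x, a | x₂') (backwards KI) and T(x'' | a, x₁') = T(x'' | a, x₂') (forwards KI). -/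
/-!
Multiplying the inverse-model identity `T(x'|a,x) π(a|x) / P(x'|x) = I_φ(a|z',z)` by the
strong density-ratio identity `P(x'|x) / P(x') = P_φ(z'|z) / P_φ(z')` shows that
`T(x'|a,x) π(a|x) / P_t(x')` depends on `x'` only through `φ x'`. So for `φ x₁' = φ x₂'` the
unnormalised backward weights `T(x'|a,x) π(a|x) P_t(x)` are proportional, and normalising gives
backwards KI. For forwards KI apply both conditions to the uniform policy: with `x'` fixed, the
density ratio makes `P(x'|x)` a function of `φ x`, and then the inverse model makes
`T(x'|a,x)` one too.
-/

namespace MarkovAbstraction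

noncomputable section

variable {X A Z : Type*} [Fintype X] [Fintype A] [Fintype Z] [DecidableEq Z]

section

variable {T : X → A → X → ℝ} {π : ℕ → A → X → ℝ} {P0 : X → ℝ} {t : ℕ}

theorem pBack_eq_of_forall_eq_mul {x₁ x₂ : X} (c : ℝ) (hc : c ≠ 0)
    (h : ∀ x a, T x₁ a x * π t a x = c * (T x₂ a x * π t a x)) (x : X) (a : A) :
    PBack T π P0 t x a x₁ = PBack T π P0 t x a x₂ := by
  unfold PBack
  simp_rw [h, mul_assoc c, ← Finset.mul_sum]
  exact mul_div_mul_left _ _ hc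

omit [Fintype X] in
theorem invModel_mul_pNext {a : A} {x' x : X} (h : PNext T π t x' x ≠ 0) :
    InvModel T π t a x' x * PNext T π t x' x = T x' a x * π t a x :=
  div_mul_cancel₀ _ h

theorem kernel_mul_policy_eq_mul_of_invModel_eq {a : A} {x x₁ x₂ : X}
    (hN₁ : PNext T π t x₁ x ≠ 0) (hN₂ : PNext T π t x₂ x ≠ 0) (hP₁ : Pvis T π P0 t x₁ ≠ 0)
    (hI : InvModel T π t a x₁ x = InvModel T π t a x₂ x)
    (hR : PNext T π t x₁ x / Pvis T π P0 t x₁ = PNext T π t x₂ x / Pvis T π P0 t x₂) :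
    T x₁ a x * π t a x =
      Pvis T π P0 t x₁ / Pvis T π P0 t x₂ * (T x₂ a x * π t a x) := by
  calc T x₁ a x * π t a x = InvModel T π t a x₁ x * PNext T π t x₁ x :=
        (invModel_mul_pNext hN₁).symm
    _ = InvModel T π t a x₂ x * (PNext T π t x₂ x / Pvis T π P0 t x₂ * Pvis T π P0 t x₁) := by
        rw [hI, ← hR, div_mul_cancel₀ _ hP₁]
    _ = Pvis T π P0 t x₁ / Pvis T π P0 t x₂ * (InvModel T π t a x₂ x * PNext T π t x₂ x) := by
        ring
    _ = _ := by rw [invModel_mul_pNext hN₂]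

theorem pBack_eq_of_invModel_eq_of_density_ratio_eq {x₁ x₂ : X}
    (hN₁ : ∀ x, PNext T π t x₁ x ≠ 0) (hN₂ : ∀ x, PNext T π t x₂ x ≠ 0)
    (hP₁ : Pvis T π P0 t x₁ ≠ 0) (hP₂ : Pvis T π P0 t x₂ ≠ 0)
    (hI : ∀ a x, InvModel T π t a x₁ x = InvModel T π t a x₂ x)
    (hR : ∀ x, PNext T π t x₁ x / Pvis T π P0 t x₁ = PNext T π t x₂ x / Pvis T π P0 t x₂)
    (x : X) (a : A) :
    PBack T π P0 t x a x₁ = PBack T π P0 t x a x₂ :=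
  pBack_eq_of_forall_eq_mul _ (div_ne_zero hP₁ hP₂)
    (fun x a => kernel_mul_policy_eq_mul_of_invModel_eq (hN₁ x) (hN₂ x) hP₁ (hI a x) (hR x)) x a

omit [Fintype X] in
theorem kernel_eq_of_invModel_eq {a : A} {x' x₁ x₂ : X} (hπ : π t a x₁ = π t a x₂)
    (hπ₀ : π t a x₂ ≠ 0) (hN : PNext T π t x' x₁ = PNext T π t x' x₂)
    (hN₀ : PNext T π t x' x₂ ≠ 0) (hI : InvModel T π t a x' x₁ = InvModel T π t a x' x₂) :
    T x' a x₁ = T x' a x₂ := by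
  unfold InvModel at hI
  rwa [hN, hπ, div_left_inj' hN₀, mul_left_inj' hπ₀] at hI

variable {φ : X → Z}

omit [Fintype Z] in
theorem invModel_congr_of_inverse_model_condition (hπφ : InPolicyClass φ π)
    (hInv : ∀ (a : A) (z z' : Z) (x x' : X), φ x = z → φ x' = z' →
      InvModelZ T π P0 φ t a z' z x = InvModel T π t a x' x)
    {a : A} {x₁ x₂ x₁' x₂' : X} (hx : φ x₁ = φ x₂) (hx' : φ x₁' = φ x₂') :
    InvModel T π t a x₁' x₁ = InvModel T π t a x₂' x₂ := by
  rw [← hInv a _ _ x₁ x₁' rfl rfl, ← hInv a _ _ x₂ x₂' hx.symm hx'.symm]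
  unfold InvModelZ
  rw [hπφ t a x₁ x₂ hx]

omit [Fintype Z] in
theorem density_ratio_congr_of_strong_density_ratio_condition
    (hStrong : ∀ (z z' : Z) (x x' : X), φ x = z → φ x' = z' →
      PNext T π t x' x / Pvis T π P0 t x' = PZNext T π P0 φ t z' z / PZ T π P0 φ t z')
    {x₁ x₂ x₁' x₂' : X} (hx : φ x₁ = φ x₂) (hx' : φ x₁' = φ x₂') :
    PNext T π t x₁' x₁ / Pvis T π P0 t x₁' = PNext T π t x₂' x₂ / Pvis T π P0 t x₂' := by
  rw [hStrong _ _ x₁ x₁' rfl rfl, hStrong _ _ x₂ x₂' hx.symm hx'.symm]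

end

def uniformPolicy : ℕ → A → X → ℝ := fun _ _ _ => (Fintype.card A : ℝ)⁻¹

omit [Fintype X] in
theorem uniformPolicy_pos [Nonempty A] (t : ℕ) (a : A) (x : X) :
    0 < (uniformPolicy t a x : ℝ) :=
  inv_pos.mpr (Nat.cast_pos.mpr Fintype.card_pos)

omit [Fintype X] in
theorem isPolicy_uniformPolicy [Nonempty A] : IsPolicy (uniformPolicy : ℕ → A → X → ℝ) := by
  refine ⟨fun t a x => (uniformPolicy_pos t a x).le, fun t x => ?_⟩
  simp only [uniformPolicy, Finset.sum_const, Finset.card_univ, nsmul_eq_mul]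
  exact mul_inv_cancel₀ (Nat.cast_ne_zero.mpr Fintype.card_ne_zero)

omit [Fintype X] [Fintype Z] [DecidableEq Z] in
theorem inPolicyClass_uniformPolicy (φ : X → Z) :
    InPolicyClass φ (uniformPolicy : ℕ → A → X → ℝ) :=
  fun _ _ _ _ _ => rfl

theorem strong_markov_implies_kinematic_inseparability_general
    (T : X → A → X → ℝ) (P0 : X → ℝ) (φ : X → Z)
    -- positivity of the denominators appearing in the definitions:
    (hpos : ∀ π : ℕ → A → X → ℝ, IsPolicy π → InPolicyClass φ π →
      (∀ (t : ℕ) (z : Z), 0 < ∑ x : X, if φ x = z then Pvis T π P0 t x else 0) ∧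
      (∀ (t : ℕ) (x' x : X), 0 < PNext T π t x' x) ∧
      (∀ (t : ℕ) (x : X), 0 < Pvis T π P0 t x) ∧
      (∀ (t : ℕ) (z' z : Z), 0 < PZNext T π P0 φ t z' z) ∧
      (∀ (t : ℕ) (z' : Z), 0 < PZ T π P0 φ t z') ∧
      (∀ (t : ℕ) (x' : X),
        0 < ∑ xt : X, ∑ ap : A, T x' ap xt * π t ap xt * Pvis T π P0 t xt))
    -- Inverse Model condition:
    (hInv : ∀ π : ℕ → A → X → ℝ, IsPolicy π → InPolicyClass φ π →
      ∀ (t : ℕ) (a : A) (z z' : Z) (x x' : X), φ x = z → φ x' = z' →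
        InvModelZ T π P0 φ t a z' z x = InvModel T π t a x' x)
    -- Strong Density Ratio condition:
    (hStrong : ∀ π : ℕ → A → X → ℝ, IsPolicy π → InPolicyClass φ π →
      ∀ (t : ℕ) (z z' : Z) (x x' : X), φ x = z → φ x' = z' →
        PNext T π t x' x / Pvis T π P0 t x'
          = PZNext T π P0 φ t z' z / PZ T π P0 φ t z') :
    ∀ π : ℕ → A → X → ℝ, IsPolicy π → InPolicyClass φ π →
      ∀ (t : ℕ) (a : A) (x x'' x1 x2 : X), φ x1 = φ x2 →
        PBack T π P0 t x a x1 = PBack T π P0 t x a x2 ∧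
          T x'' a x1 = T x'' a x2 := by
  intro π hπ hπφ t a x x'' x₁ x₂ hφ
  have : Nonempty A := ⟨a⟩
  have hu : IsPolicy (uniformPolicy : ℕ → A → X → ℝ) := isPolicy_uniformPolicy
  have huφ := inPolicyClass_uniformPolicy (A := A) φ
  obtain ⟨-, hN, hP, -⟩ := hpos π hπ hπφ
  obtain ⟨-, hNu, hPu, -⟩ := hpos _ hu huφ
  constructor
  · exact pBack_eq_of_invModel_eq_of_density_ratio_eq (fun _ => (hN t _ _).ne')
      (fun _ => (hN t _ _).ne') (hP t x₁).ne' (hP t x₂).ne'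
      (fun _ _ => invModel_congr_of_inverse_model_condition hπφ (hInv π hπ hπφ t) rfl hφ)
      (fun _ => density_ratio_congr_of_strong_density_ratio_condition
        (hStrong π hπ hπφ t) rfl hφ) x a
  · have hRu := density_ratio_congr_of_strong_density_ratio_condition
      (hStrong _ hu huφ t) hφ (rfl : φ x'' = φ x'')
    have hNeq : PNext T uniformPolicy t x'' x₁ = PNext T uniformPolicy t x'' x₂ :=
      (div_left_inj' (hPu t x'').ne').mp hRu
    exact kernel_eq_of_invModel_eq rfl (uniformPolicy_pos t a x₂).ne' hNeq (hNu t x'' x₂).ne'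
      (invModel_congr_of_inverse_model_condition huφ (hInv _ hu huφ t) hφ rfl)

/-- **Appendix D theorem.** If the Inverse Model condition and the Strong Density Ratio
condition hold for every policy in `Π_φ` and every timestep, then `φ` is a kinematic
inseparability abstraction over `Π_φ`: ground states sharing an abstract state satisfy
both backwards KI (equal backwards dynamics) and forwards KI (equal transition dynamics). -/
theorem strong_markov_implies_kinematic_inseparability
    (T : X → A → X → ℝ) (P0 : X → ℝ) (φ : X → Z)
    (hT : IsKernel T) (hP0 : IsDist P0)
    -- positivity of the denominators appearing in the definitions:
    (hpos : ∀ π : ℕ → A → X → ℝ, IsPolicy π → InPolicyClass φ π →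
      (∀ (t : ℕ) (z : Z), 0 < ∑ x : X, if φ x = z then Pvis T π P0 t x else 0) ∧
      (∀ (t : ℕ) (x' x : X), 0 < PNext T π t x' x) ∧
      (∀ (t : ℕ) (x : X), 0 < Pvis T π P0 t x) ∧
      (∀ (t : ℕ) (z' z : Z), 0 < PZNext T π P0 φ t z' z) ∧
      (∀ (t : ℕ) (z' : Z), 0 < PZ T π P0 φ t z') ∧
      (∀ (t : ℕ) (x' : X),
        0 < ∑ xt : X, ∑ ap : A, T x' ap xt * π t ap xt * Pvis T π P0 t xt))
    -- Inverse Model condition: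
    (hInv : ∀ π : ℕ → A → X → ℝ, IsPolicy π → InPolicyClass φ π →
      ∀ (t : ℕ) (a : A) (z z' : Z) (x x' : X), φ x = z → φ x' = z' →
        InvModelZ T π P0 φ t a z' z x = InvModel T π t a x' x)
    -- Strong Density Ratio condition:
    (hStrong : ∀ π : ℕ → A → X → ℝ, IsPolicy π → InPolicyClass φ π →
      ∀ (t : ℕ) (z z' : Z) (x x' : X), φ x = z → φ x' = z' →
        PNext T π t x' x / Pvis T π P0 t x'
          = PZNext T π P0 φ t z' z / PZ T π P0 φ t z') :
    ∀ π : ℕ → A → X → ℝ, IsPolicy π → InPolicyClass φ π →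
      ∀ (t : ℕ) (a : A) (x x'' x1 x2 : X), φ x1 = φ x2 →
        PBack T π P0 t x a x1 = PBack T π P0 t x a x2 ∧
          T x'' a x1 = T x'' a x2 :=
  strong_markov_implies_kinematic_inseparability_general T P0 φ hpos hInv hStrong
end

end MarkovAbstraction
end
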